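/- Every fixed point of SSPM reachable from the initial configuration with n grains is, up to a single possible plateau structure, a 'double staircase': there exists a peak index such that to the right of the peak heights strictly decrease by exactly 1 except for at most one plateau (two adjacent equal columns), and symmetrically to the left, with possibly a plateau at the top. -/

import Mathlib

/-- Initial configuration: `n` grains at position 0. -/
def initConf (n : ℕ) : ℤ → ℕ := fun i => if i = 0 then n else 0

/-- Move one grain from column `i` to column `j`. -/
def moveGrain (a : ℤ → ℕ) (i j : ℤ) : ℤ → ℕ :=
  fun k => if k = i then a k - 1 else if k = j then a k + 1 else a k

/-- One sequential SSPM step. -/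
def sspmStep (a b : ℤ → ℕ) : Prop :=
  ∃ i : ℤ, (a (i + 1) + 2 ≤ a i ∧ b = moveGrain a i (i + 1)) ∨
           (a (i - 1) + 2 ≤ a i ∧ b = moveGrain a i (i - 1))

/-- Left rule applicable at column `i`. -/
def appL (a : ℤ → ℕ) (i : ℤ) : Prop := a (i - 1) + 2 ≤ a i

/-- Right rule applicable at column `i`. -/
def appR (a : ℤ → ℕ) (i : ℤ) : Prop := a (i + 1) + 2 ≤ a i

/-- A choice function for a parallel step: `some false` = fire left,
`some true` = fire right, `none` = not fired.  Every column on which some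
rule applies must fire. -/
def ValidChoice (a : ℤ → ℕ) (d : ℤ → Option Bool) : Prop :=
  ∀ i : ℤ, (d i = some false → appL a i) ∧ (d i = some true → appR a i) ∧
    (d i = none → ¬ appL a i ∧ ¬ appR a i)

/-- The configuration resulting from firing all columns according to `d`. -/
def psspmResult (a : ℤ → ℕ) (d : ℤ → Option Bool) : ℤ → ℕ :=
  fun i => (a i - (if d i = none then 0 else 1))
    + (if d (i - 1) = some true then 1 else 0)
    + (if d (i + 1) = some false then 1 else 0)

/-- One parallel PSSPM step. -/
def psspmStep (a b : ℤ → ℕ) : Prop :=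
  ∃ d : ℤ → Option Bool, ValidChoice a d ∧ b = psspmResult a d

/-- Reachability: reflexive transitive closure of a step relation. -/
def Reaches (step : (ℤ → ℕ) → (ℤ → ℕ) → Prop) : (ℤ → ℕ) → (ℤ → ℕ) → Prop :=
  Relation.ReflTransGen step

/-- Fixed point: no rule applies anywhere. -/
def IsFixed (c : ℤ → ℕ) : Prop :=
  ∀ i : ℤ, c i ≤ c (i + 1) + 1 ∧ c i ≤ c (i - 1) + 1

/-- Unimodal configuration: nondecreasing up to some index, nonincreasing after. -/
def Unimodal (c : ℤ → ℕ) : Prop :=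
  ∃ j : ℤ, (∀ i k : ℤ, i ≤ k → k ≤ j → c i ≤ c k) ∧
           (∀ i k : ℤ, j ≤ i → i ≤ k → c k ≤ c i)

/-- Strict lexicographic order, reading positions from left to right. -/
def lexLt (a b : ℤ → ℕ) : Prop :=
  ∃ i : ℤ, a i < b i ∧ ∀ k : ℤ, k < i → a k = b k

/-- Lexicographic order. -/
def lexLe (a b : ℤ → ℕ) : Prop := a = b ∨ lexLt a b

/-- `closeStar a b` (a ◁* b): the nonzero entries of `a - b`, read from left
to right, form a concatenation of pairs (−1 then +1), recorded by an ordered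
list of index pairs. -/
def closeStar (a b : ℤ → ℕ) : Prop :=
  ∃ l : List (ℤ × ℤ),
    (∀ p ∈ l, p.1 < p.2) ∧
    l.Chain' (fun p q => p.2 < q.1) ∧
    ∀ i : ℤ, (a i : ℤ) - (b i : ℤ) =
      (if i ∈ l.map Prod.snd then 1 else 0) - (if i ∈ l.map Prod.fst then 1 else 0)

/-- `closeRel a b` (a ◁ b): `a - b` is exactly −1 at some index `i` and +1 at
some index `j > i`, and 0 elsewhere. -/
def closeRel (a b : ℤ → ℕ) : Prop :=
  ∃ i j : ℤ, i < j ∧ ((a i : ℤ) = (b i : ℤ) - 1) ∧ (a j = b j + 1) ∧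
    ∀ k : ℤ, k ≠ i → k ≠ j → a k = b k

/-!
To the right of its peak, a reachable configuration evolves like Brylawski's one-sided sand pile
model (SPM), whose reachable configurations are nonincreasing with any two plateaus separated by a
cliff (a drop of at least `2`). The invariant is that a configuration splits between two adjacent
columns into two halves which, read outward, both have this shape. A move inside a half keeps its
shape, and a move across the split is a cliff, so the split can first be shifted past it. A fixed
point has no cliff, so each half has at most one plateau.
-/

/-- `a`, read rightwards from column `s`, has the shape of a reachable SPM configuration. -/
structure IsSPMTail (a : ℤ → ℕ) (s : ℤ) : Prop where
  succ_le : ∀ k, s ≤ k → a (k + 1) ≤ a k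
  cliff_between : ∀ i j, s ≤ i → i < j → a i = a (i + 1) → a j = a (j + 1) → 0 < a j →
    ∃ k, i < k ∧ k < j ∧ appR a k

def reflect (a : ℤ → ℕ) : ℤ → ℕ := fun k => a (-k)

/-- The split lies between columns `s - 1` and `s`; the left half is read leftwards. -/
def IsSPMSplittable (a : ℤ → ℕ) : Prop :=
  ∃ s, IsSPMTail a s ∧ IsSPMTail (reflect a) (1 - s)

section reflect

variable {a : ℤ → ℕ} {k : ℤ}

theorem reflect_apply : reflect a k = a (-k) := rfl

@[simp] theorem reflect_neg : reflect a (-k) = a k := by simp [reflect]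

@[simp] theorem reflect_reflect : reflect (reflect a) = a := by
  funext k; simp [reflect]

@[simp] theorem reflect_neg_add_one : reflect a (-k + 1) = a (k - 1) := by
  simp [reflect_apply, sub_eq_add_neg, add_comm]

theorem IsFixed.reflect (h : IsFixed a) : IsFixed (reflect a) := fun i => by
  simpa [reflect_apply, sub_eq_add_neg, add_comm] using (h (-i)).symm

end reflect

section moveGrain

variable {a : ℤ → ℕ} {i j k m : ℤ}

theorem moveGrain_apply_self : moveGrain a i j i = a i - 1 := by simp [moveGrain]

theorem moveGrain_apply_target (h : j ≠ i) : moveGrain a i j j = a j + 1 := by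
  simp [moveGrain, h]

theorem moveGrain_apply_of_ne (hi : k ≠ i) (hj : k ≠ j) : moveGrain a i j k = a k := by
  simp [moveGrain, hi, hj]

theorem reflect_moveGrain :
    reflect (moveGrain a i (i - 1)) = moveGrain (reflect a) (-i) (-i + 1) := by
  funext k
  simp only [reflect, moveGrain]
  congr 1 <;> simp only [neg_eq_iff_eq_neg, neg_add, neg_neg, sub_eq_add_neg]

end moveGrain

namespace IsSPMTail

variable {a b : ℤ → ℕ} {s t i j k : ℤ}

theorem mono (h : IsSPMTail a s) (hst : s ≤ t) : IsSPMTail a t :=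
  ⟨fun k hk => h.succ_le k (hst.trans hk), fun i j hi => h.cliff_between i j (hst.trans hi)⟩

theorem congr (h : IsSPMTail a s) (hab : ∀ k, s ≤ k → a k = b k) : IsSPMTail b s := by
  refine ⟨fun k hk => ?_, fun i j hi hij hpi hpj hj => ?_⟩
  · rw [← hab k hk, ← hab (k + 1) (by omega)]
    exact h.succ_le k hk
  · rw [← hab i hi, ← hab (i + 1) (by omega)] at hpi
    rw [← hab j (by omega), ← hab (j + 1) (by omega)] at hpj
    rw [← hab j (by omega)] at hj
    obtain ⟨k, hik, hkj, hk⟩ := h.cliff_between i j hi hij hpi hpj hj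
    refine ⟨k, hik, hkj, ?_⟩
    rwa [appR, ← hab k (by omega), ← hab (k + 1) (by omega)]

theorem of_eq_zero (h : ∀ k, s < k → a k = 0) : IsSPMTail a s :=
  ⟨fun k hk => by simp [h (k + 1) (by omega)],
    fun i j hi hij _ _ hj => absurd (h j (by omega)) hj.ne'⟩

theorem pred (h : IsSPMTail a s) (hs : a s < a (s - 1)) : IsSPMTail a (s - 1) := by
  refine ⟨fun k hk => ?_, fun i j hi hij hpi hpj hj => ?_⟩
  · rcases hk.eq_or_lt with rfl | hk
    · simpa using hs.le
    · exact h.succ_le k (by omega)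
  · rcases hi.eq_or_lt with rfl | hi
    · simp at hpi; omega
    · exact h.cliff_between i j (by omega) hij hpi hpj hj

theorem le_of_le (h : IsSPMTail a s) (hk : s ≤ k) : a k ≤ a s :=
  antitoneOn_of_add_one_le Set.ordConnected_Ici (fun k _ hk _ => h.succ_le k hk)
    Set.self_mem_Ici hk hk

theorem pred_le_of_reflect (h : IsSPMTail (reflect a) t) (hk : k ≤ -t) : a (k - 1) ≤ a k := by
  simpa using h.succ_le (-k) (by omega)

theorem eq_of_plateau (h : IsSPMTail a s) (hfix : IsFixed a) (hi : s ≤ i) (hj : s ≤ j)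
    (hpi : a i = a (i + 1)) (hi0 : 0 < a (i + 1)) (hpj : a j = a (j + 1)) (hj0 : 0 < a (j + 1)) :
    i = j := by
  have key : ∀ {i j}, s ≤ i → i < j → a i = a (i + 1) → a j = a (j + 1) → 0 < a (j + 1) →
      False := fun hi hij hpi hpj hj0 => by
    obtain ⟨k, -, -, hk⟩ := h.cliff_between _ _ hi hij hpi hpj (hpj ▸ hj0)
    exact absurd (hfix k).1 (by unfold appR at hk; omega)
  rcases lt_trichotomy i j with hij | rfl | hij
  · exact (key hi hij hpi hpj hj0).elim
  · rfl
  · exact (key hj hij hpj hpi hi0).elim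

end IsSPMTail

section moveGrainSucc

variable {a : ℤ → ℕ} {s m i j k : ℤ}

theorem appR_moveGrain (hk : k ≠ m) (h : appR a k) : appR (moveGrain a m (m + 1)) k := by
  unfold appR at h ⊢
  rcases (by omega : k = m - 1 ∨ k = m + 1 ∨ (k + 1 ≠ m ∧ k ≠ m + 1)) with rfl | rfl | ⟨h₁, h₂⟩
  · rw [sub_add_cancel] at h ⊢
    rw [moveGrain_apply_self, moveGrain_apply_of_ne (by omega) (by omega)]
    omega
  · rw [moveGrain_apply_target (by omega), moveGrain_apply_of_ne (by omega) (by omega)]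
    omega
  · rwa [moveGrain_apply_of_ne h₁ (by omega), moveGrain_apply_of_ne hk h₂]

theorem appR_moveGrain_pred (hm : appR a m) (h : a m < a (m - 1)) :
    appR (moveGrain a m (m + 1)) (m - 1) := by
  unfold appR at hm ⊢
  rw [sub_add_cancel, moveGrain_apply_self, moveGrain_apply_of_ne (by omega) (by omega)]
  omega

theorem appR_moveGrain_succ (h : a (m + 1 + 1) < a (m + 1)) :
    appR (moveGrain a m (m + 1)) (m + 1) := by
  unfold appR
  rw [moveGrain_apply_target (by omega), moveGrain_apply_of_ne (by omega) (by omega)]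
  omega

namespace IsSPMTail

theorem eq_or_plateau_of_moveGrain (h : IsSPMTail a s) (hm : appR a m) (hi : s ≤ i)
    (hb : moveGrain a m (m + 1) i = moveGrain a m (m + 1) (i + 1)) :
    i = m ∨ ((i + 1 < m ∨ m + 1 < i) ∧ a i = a (i + 1)) := by
  unfold appR at hm
  rcases (by omega : i = m - 1 ∨ i = m ∨ i = m + 1 ∨ i + 1 < m ∨ m + 1 < i)
    with rfl | rfl | rfl | hi' | hi'
  · have := h.succ_le (m - 1) hi
    rw [sub_add_cancel, moveGrain_apply_self, moveGrain_apply_of_ne (by omega) (by omega)] at hb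
    rw [sub_add_cancel] at this
    omega
  · exact .inl rfl
  · have := h.succ_le (m + 1) hi
    rw [moveGrain_apply_target (by omega), moveGrain_apply_of_ne (by omega) (by omega)] at hb
    omega
  all_goals
    rw [moveGrain_apply_of_ne (by omega) (by omega),
      moveGrain_apply_of_ne (by omega) (by omega)] at hb
    exact .inr ⟨by omega, hb⟩

theorem exists_appR_moveGrain_of_lt (h : IsSPMTail a s) (hm : appR a m) (hi : s ≤ i)
    (him : i + 1 < m) (hpi : a i = a (i + 1)) :
    ∃ k, i < k ∧ k < m ∧ appR (moveGrain a m (m + 1)) k := by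
  by_cases hlt : a m < a (m - 1)
  · exact ⟨m - 1, by omega, by omega, appR_moveGrain_pred hm hlt⟩
  · have hp : a (m - 1) = a m :=
      le_antisymm (not_lt.1 hlt) (by simpa using h.succ_le (m - 1) (by omega))
    obtain ⟨k, hik, hkm, hk⟩ := h.cliff_between i (m - 1) hi (by omega) hpi
      (by rwa [sub_add_cancel]) (by unfold appR at hm; omega)
    exact ⟨k, hik, by omega, appR_moveGrain (by omega) hk⟩

theorem exists_appR_moveGrain_of_gt (h : IsSPMTail a s) (hsm : s ≤ m) (hmj : m + 1 < j)
    (hpj : a j = a (j + 1)) (hj : 0 < a j) :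
    ∃ k, m < k ∧ k < j ∧ appR (moveGrain a m (m + 1)) k := by
  by_cases hlt : a (m + 1 + 1) < a (m + 1)
  · exact ⟨m + 1, by omega, hmj, appR_moveGrain_succ hlt⟩
  · have hp : a (m + 1) = a (m + 1 + 1) := le_antisymm (not_lt.1 hlt) (h.succ_le _ (by omega))
    obtain ⟨k, hik, hkj, hk⟩ := h.cliff_between (m + 1) j (by omega) hmj hp hpj hj
    exact ⟨k, by omega, hkj, appR_moveGrain (by omega) hk⟩

theorem moveGrain_succ (h : IsSPMTail a s) (hsm : s ≤ m) (hm : appR a m) :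
    IsSPMTail (moveGrain a m (m + 1)) s := by
  refine ⟨fun k hk => ?_, fun i j hi hij hpi hpj hj => ?_⟩
  · unfold appR at hm
    rcases (by omega : k = m - 1 ∨ k = m ∨ k = m + 1 ∨ (k + 1 ≠ m ∧ k ≠ m ∧ k ≠ m + 1))
      with rfl | rfl | rfl | ⟨h₁, h₂, h₃⟩
    · have := h.succ_le (m - 1) hk
      rw [sub_add_cancel] at this ⊢
      rw [moveGrain_apply_self, moveGrain_apply_of_ne (by omega) (by omega)]
      omega
    · rw [moveGrain_apply_self, moveGrain_apply_target (by omega)]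
      omega
    · have := h.succ_le (m + 1) hk
      rw [moveGrain_apply_target (by omega), moveGrain_apply_of_ne (by omega) (by omega)]
      omega
    · rw [moveGrain_apply_of_ne h₁ (by omega), moveGrain_apply_of_ne h₂ h₃]
      exact h.succ_le k hk
  · rcases h.eq_or_plateau_of_moveGrain hm hi hpi with rfl | ⟨hi', hpi'⟩ <;>
      rcases h.eq_or_plateau_of_moveGrain hm (hi.trans hij.le) hpj with rfl | ⟨hj', hpj'⟩
    · omega
    · rw [moveGrain_apply_of_ne (by omega) (by omega)] at hj
      exact h.exists_appR_moveGrain_of_gt hsm (by omega) hpj' hj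
    · obtain ⟨k, hik, hkj, hk⟩ := h.exists_appR_moveGrain_of_lt hm hi (by omega) hpi'
      exact ⟨k, hik, hkj, hk⟩
    · rw [moveGrain_apply_of_ne (by omega) (by omega)] at hj
      obtain ⟨k, hik, hkj, hk⟩ := h.cliff_between i j hi hij hpi' hpj' hj
      by_cases hkm : k = m
      · obtain ⟨k', hik', hk'm, hk'⟩ := h.exists_appR_moveGrain_of_lt hm hi (by omega) hpi'
        exact ⟨k', hik', by omega, hk'⟩
      · exact ⟨k, hik, hkj, appR_moveGrain hkm hk⟩

end IsSPMTail

end moveGrainSucc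

theorem isSPMSplittable_reflect {a : ℤ → ℕ} (h : IsSPMSplittable a) :
    IsSPMSplittable (reflect a) := by
  obtain ⟨s, hR, hL⟩ := h
  exact ⟨1 - s, hL, by simpa using hR⟩

theorem isSPMSplittable_initConf (n : ℕ) : IsSPMSplittable (initConf n) :=
  ⟨0, .of_eq_zero fun k hk => if_neg hk.ne', .of_eq_zero fun k hk => if_neg (by omega)⟩

namespace IsSPMSplittable

variable {a b : ℤ → ℕ} {m : ℤ}

theorem moveGrain_succ (h : IsSPMSplittable a) (hm : appR a m) :
    IsSPMSplittable (moveGrain a m (m + 1)) := by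
  obtain ⟨s, hR, hL⟩ := h
  have hsm : s - 1 ≤ m := by
    by_contra! hms
    have := hL.pred_le_of_reflect (k := m + 1) (by omega)
    unfold appR at hm
    simp only [add_sub_cancel_right] at this
    omega
  obtain ⟨s, hsm, hR, hL⟩ : ∃ s ≤ m, IsSPMTail a s ∧ IsSPMTail (reflect a) (1 - s) := by
    rcases hsm.eq_or_lt with rfl | hsm
    · refine ⟨s - 1, le_rfl, hR.pred ?_, hL.mono (by omega)⟩
      unfold appR at hm
      rw [sub_add_cancel] at hm
      omega
    · exact ⟨s, by omega, hR, hL⟩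
  refine ⟨s, hR.moveGrain_succ hsm hm, hL.congr fun k hk => ?_⟩
  simp only [reflect_apply]
  rw [moveGrain_apply_of_ne (by omega) (by omega)]

theorem moveGrain_pred (h : IsSPMSplittable a) (hm : appL a m) :
    IsSPMSplittable (moveGrain a m (m - 1)) := by
  have := (isSPMSplittable_reflect h).moveGrain_succ (m := -m) (by simpa [appR, appL] using hm)
  rw [← reflect_moveGrain] at this
  simpa using isSPMSplittable_reflect this

theorem of_sspmStep (h : IsSPMSplittable a) (hab : sspmStep a b) : IsSPMSplittable b := by
  obtain ⟨i, ⟨hi, rfl⟩ | ⟨hi, rfl⟩⟩ := hab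
  exacts [h.moveGrain_succ hi, h.moveGrain_pred hi]

theorem of_reaches {n : ℕ} (h : Reaches sspmStep (initConf n) a) : IsSPMSplittable a := by
  induction h with
  | refl => exact isSPMSplittable_initConf n
  | tail _ hstep ih => exact ih.of_sspmStep hstep

theorem exists_split_le (h : IsSPMSplittable a) :
    ∃ s, IsSPMTail a s ∧ IsSPMTail (reflect a) (1 - s) ∧ a (s - 1) ≤ a s := by
  obtain ⟨s, hR, hL⟩ := h
  by_cases hs : a s < a (s - 1)
  · exact ⟨s - 1, hR.pred hs, hL.mono (by omega),
      hL.pred_le_of_reflect (k := s - 1) (by omega)⟩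
  · exact ⟨s, hR, hL, not_lt.1 hs⟩

end IsSPMSplittable

theorem sspm_fixed_point_double_staircase (n : ℕ) (c : ℤ → ℕ)
    (hreach : Reaches sspmStep (initConf n) c) (hfix : IsFixed c) :
    ∃ p : ℤ,
      (∀ j : ℤ, c j ≤ c p) ∧
      (∀ i : ℤ, p ≤ i → c (i + 1) ≤ c i ∧ c i ≤ c (i + 1) + 1) ∧
      (∀ i : ℤ, i ≤ p → c (i - 1) ≤ c i ∧ c i ≤ c (i - 1) + 1) ∧
      (∀ i j : ℤ, p < i → p < j → c i = c (i + 1) → 0 < c (i + 1) →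
        c j = c (j + 1) → 0 < c (j + 1) → i = j) ∧
      (∀ i j : ℤ, i < p → j < p → c i = c (i - 1) → 0 < c (i - 1) →
        c j = c (j - 1) → 0 < c (j - 1) → i = j) := by
  obtain ⟨p, hR, hL, hp⟩ := (IsSPMSplittable.of_reaches hreach).exists_split_le
  have hleft : ∀ i, i ≤ p → c (i - 1) ≤ c i := by
    intro i hi
    rcases hi.eq_or_lt with rfl | hi
    exacts [hp, hL.pred_le_of_reflect (k := i) (by omega)]
  refine ⟨p, fun j => ?_, fun i hi => ⟨hR.succ_le i hi, (hfix i).1⟩,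
    fun i hi => ⟨hleft i hi, (hfix i).2⟩, fun i j hi hj => hR.eq_of_plateau hfix hi.le hj.le,
    fun i j hi hj hpi hi0 hpj hj0 => ?_⟩
  · rcases le_or_gt p j with hj | hj
    · exact hR.le_of_le hj
    · have := hL.le_of_le (k := -j) (by omega)
      simp only [reflect_apply, neg_neg, neg_sub] at this
      exact this.trans hp
  · have := hL.eq_of_plateau hfix.reflect (i := -i) (j := -j) (by omega) (by omega)
      (by simpa) (by simpa) (by simpa) (by simpa)
    omega
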